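/- arXiv:2009.06909 — 2 statements merged into one kernel-verified Lean document; each statement's English description precedes it below -/
import Mathlib

section
/- Let u : ℂ → ℂ be an entire function such that ⟨·⟩^{-ε} u ∈ L²(ℂ) for some ε > 0. Then u is a polynomial of degree strictly less than ε - 1; in particular, if 0 < ε ≤ 1 then u = 0. -/
open Complex MeasureTheory

/-- The Japanese bracket `⟨z⟩ = (1+|z|²)^{1/2}`. -/
noncomputable def jap (z : ℂ) : ℝ := Real.sqrt (1 + ‖z‖ ^ 2)

/-!
Let `g = ⟨·⟩^{-ε} u ∈ L²` and let `aₙ = u⁽ⁿ⁾(0) / n!`. The Cauchy estimate on the circles of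
radius `r ∈ (R, 2R)`, integrated in polar coordinates, gives `|aₙ| R^{n+2} ≲ ∫_{R<|z|<2R} |u|`,
and Cauchy–Schwarz bounds the right-hand side by `‖g‖_{L²(|z|>R)} R^{ε+1}` up to a constant.
Since the tail norm of `g` tends to `0`, `aₙ = 0` as soon as `ε ≤ n + 1`, so the Taylor series
of `u` is a polynomial of degree `< ε - 1`.
-/

open Real Set Filter Metric
open scoped ENNReal NNReal Topology Nat

section Tail

variable {α : Type*} [NormedAddCommGroup α] [MeasurableSpace α] [OpensMeasurableSpace α]
  {μ : Measure α}

theorem tendsto_setLIntegral_norm_gt {f : α → ℝ≥0∞} (hf : ∫⁻ x, f x ∂μ ≠ ∞) :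
    Tendsto (fun R : ℝ => ∫⁻ x in {x | R < ‖x‖}, f x ∂μ) atTop (𝓝 0) := by
  have hmeas : ∀ R : ℝ, MeasurableSet {x : α | R < ‖x‖} :=
    fun R => measurableSet_lt measurable_const measurable_norm
  have hempty : (⋂ R : ℝ, {x : α | R < ‖x‖}) = ∅ :=
    eq_empty_of_forall_notMem fun x hx => lt_irrefl ‖x‖ (mem_iInter.1 hx ‖x‖)
  have := tendsto_measure_iInter_atTop (μ := μ.withDensity f)
    (fun R => (hmeas R).nullMeasurableSet)
    (fun R R' h x (hx : R' < ‖x‖) => h.trans_lt hx)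
    ⟨0, by
      rw [withDensity_apply _ (hmeas 0)]
      exact ne_top_of_le_ne_top hf (setLIntegral_le_lintegral _ _)⟩
  rw [hempty, measure_empty] at this
  simpa only [Function.comp_def, withDensity_apply _ (hmeas _)] using this

theorem MeasureTheory.MemLp.tendsto_eLpNorm_restrict_norm_gt {E : Type*} [NormedAddCommGroup E]
    {g : α → E} {p : ℝ≥0∞} (hg : MemLp g p μ) (hp : p ≠ ∞) :
    Tendsto (fun R : ℝ => eLpNorm g p (μ.restrict {x | R < ‖x‖})) atTop (𝓝 0) := by
  rcases eq_or_ne p 0 with rfl | hp0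
  · simp
  simp_rw [eLpNorm_eq_lintegral_rpow_enorm_toReal hp0 hp]
  have hpos : 0 < 1 / p.toReal := by simp [ENNReal.toReal_pos hp0 hp]
  have h := (ENNReal.continuous_rpow_const (y := 1 / p.toReal)).tendsto 0
  rw [ENNReal.zero_rpow_of_pos hpos] at h
  refine h.comp (tendsto_setLIntegral_norm_gt ?_)
  exact (lintegral_rpow_enorm_lt_top_of_eLpNorm_lt_top hp0 hp hg.2).ne

end Tail

theorem DifferentiableOn.two_pi_mul_pow_mul_norm_iteratedDeriv_le {E : Type*}
    [NormedAddCommGroup E] [NormedSpace ℂ E] [CompleteSpace E] {f : ℂ → E} {c : ℂ} {r : ℝ}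
    (hf : DifferentiableOn ℂ f (closedBall c r)) (hr : 0 < r) (n : ℕ) :
    2 * π * r ^ n * ‖iteratedDeriv n f c‖ ≤ n ! * ∫ θ in 0..2 * π, ‖f (circleMap c r θ)‖ := by
  set ρ : ℝ≥0 := ⟨r, hr.le⟩
  have hseries := (hf.hasFPowerSeriesOnBall (R := ρ) hr).factorial_smul 1 n
  rw [iteratedFDeriv_apply_eq_iteratedDeriv_mul_prod, Finset.prod_const_one, one_smul] at hseries
  have hcoeff : ‖iteratedDeriv n f c‖ ≤ n ! * ‖cauchyPowerSeries f c r n‖ := by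
    rw [← hseries, ← Nat.cast_smul_eq_nsmul ℝ, norm_smul, Real.norm_natCast]
    gcongr
    exact ((cauchyPowerSeries f c r n).le_opNorm _).trans_eq (by simp)
  have hcauchy := norm_cauchyPowerSeries_le f c r n
  rw [abs_of_pos hr, inv_pow] at hcauchy
  calc 2 * π * r ^ n * ‖iteratedDeriv n f c‖
      ≤ 2 * π * r ^ n * (n ! * (((2 * π)⁻¹ * ∫ θ in 0..2 * π, ‖f (circleMap c r θ)‖) *
          (r ^ n)⁻¹)) := by
        gcongr
        exact hcoeff.trans (mul_le_mul_of_nonneg_left hcauchy (Nat.cast_nonneg _))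
    _ = n ! * ∫ θ in 0..2 * π, ‖f (circleMap c r θ)‖ := by
      field_simp

theorem Differentiable.exists_polynomial_of_eventually_iteratedDeriv_eq_zero {f : ℂ → ℂ}
    (hf : Differentiable ℂ f) (h : ∀ᶠ n in atTop, iteratedDeriv n f 0 = 0) :
    ∃ p : Polynomial ℂ, (∀ z, f z = p.eval z) ∧ ∀ n, p.coeff n = iteratedDeriv n f 0 / n ! := by
  obtain ⟨N, hN⟩ := eventually_atTop.1 h
  refine ⟨∑ n ∈ Finset.range N, Polynomial.C (iteratedDeriv n f 0 / n !) * Polynomial.X ^ n,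
    fun z => ?_, fun n => ?_⟩
  · rw [← taylorSeries_eq_of_entire' 0 z hf, tsum_eq_sum (s := Finset.range N),
      Polynomial.eval_finsetSum]
    · refine Finset.sum_congr rfl fun n _ => ?_
      simp only [Polynomial.eval_mul, Polynomial.eval_C, Polynomial.eval_pow, Polynomial.eval_X,
        sub_zero]
      ring
    · intro n hn
      simp [hN n (by simpa using hn)]
  · simp only [Polynomial.finsetSum_coeff, Polynomial.coeff_C_mul_X_pow, Finset.sum_ite_eq,
      Finset.mem_range]
    split_ifs with hn
    · rfl
    · rw [hN n (not_lt.1 hn), zero_div]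

theorem Complex.polarCoord_symm_eq_circleMap (p : ℝ × ℝ) :
    Complex.polarCoord.symm p = circleMap 0 p.1 p.2 := by
  simp [circleMap, Complex.exp_mul_I, ← Complex.ofReal_cos, ← Complex.ofReal_sin]

theorem setLIntegral_preimage_norm_Ioo_eq_lintegral_circleMap {f : ℂ → ℝ≥0∞} (hf : Measurable f)
    {a b : ℝ} (ha : 0 ≤ a) :
    ∫⁻ z in (‖·‖) ⁻¹' Ioo a b, f z =
      ∫⁻ r in Ioo a b, ENNReal.ofReal r * ∫⁻ θ in Ioo (-π) π, f (circleMap 0 r θ) := by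
  have hpolar : Ioo a b ×ˢ Ioo (-π) π = polarCoord.target ∩ Ioo a b ×ˢ univ := by
    ext ⟨r, θ⟩
    simp only [polarCoord_target, mem_prod, mem_inter_iff, mem_Ioi, mem_Ioo, mem_univ, and_true]
    constructor
    · rintro ⟨hr, hθ⟩
      exact ⟨⟨ha.trans_lt hr.1, hθ⟩, hr⟩
    · rintro ⟨⟨_, hθ⟩, hr⟩
      exact ⟨hr, hθ⟩
  set F : ℝ × ℝ → ℝ≥0∞ := fun p => ENNReal.ofReal p.1 * f (circleMap 0 p.1 p.2)
  have hcircle : Continuous fun p : ℝ × ℝ => circleMap 0 p.1 p.2 := by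
    simp only [circleMap]; fun_prop
  have hF : Measurable F :=
    (ENNReal.measurable_ofReal.comp measurable_fst).mul (hf.comp hcircle.measurable)
  calc ∫⁻ z in (‖·‖) ⁻¹' Ioo a b, f z
      = ∫⁻ p in polarCoord.target, (Ioo a b ×ˢ univ).indicator F p := by
        rw [← lintegral_indicator (measurable_norm measurableSet_Ioo),
          ← Complex.lintegral_comp_polarCoord_symm]
        refine setLIntegral_congr_fun polarCoord.open_target.measurableSet fun p hp => ?_
        have hr : 0 < p.1 := hp.1
        simp only [F, indicator, mem_preimage, mem_prod, mem_univ, and_true, smul_eq_mul,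
          Complex.polarCoord_symm_eq_circleMap, norm_circleMap_zero, abs_of_pos hr, mul_ite,
          mul_zero]
    _ = ∫⁻ p in Ioo a b ×ˢ Ioo (-π) π, F p := by
        rw [lintegral_indicator (measurableSet_Ioo.prod MeasurableSet.univ),
          Measure.restrict_restrict (measurableSet_Ioo.prod MeasurableSet.univ), hpolar, inter_comm]
    _ = _ := by
        rw [Measure.volume_eq_prod, ← Measure.prod_restrict, lintegral_prod _ hF.aemeasurable]
        refine lintegral_congr fun r => ?_
        simp only [F]
        exact lintegral_const_mul _ (hf.comp (measurable_circleMap 0 r))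

theorem ofReal_intervalIntegral_norm_circleMap_le {E : Type*} [NormedAddCommGroup E]
    (f : ℂ → E) (c : ℂ) (r : ℝ) :
    ENNReal.ofReal (∫ θ in 0..2 * π, ‖f (circleMap c r θ)‖) ≤
      ∫⁻ θ in Ioo (-π) π, ‖f (circleMap c r θ)‖ₑ := by
  have hperiodic : Function.Periodic (fun θ => ‖f (circleMap c r θ)‖) (2 * π) := fun θ => by
    simp only [periodic_circleMap c r θ]
  rw [← zero_add (2 * π), hperiodic.intervalIntegral_add_eq 0 (-π),
    intervalIntegral.integral_of_le (by linarith [pi_pos]), integral_Ioc_eq_integral_Ioo,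
    show -π + 2 * π = π by ring]
  refine (ofReal_le_enorm _).trans ((enorm_integral_le_lintegral_enorm _).trans_eq ?_)
  simp only [enorm_norm]

theorem Differentiable.ofReal_two_pi_mul_pow_mul_norm_iteratedDeriv_le {E : Type*}
    [NormedAddCommGroup E] [NormedSpace ℂ E] [CompleteSpace E] {f : ℂ → E}
    (hf : Differentiable ℂ f) (n : ℕ) {R : ℝ} (hR : 0 < R) :
    ENNReal.ofReal (2 * π * R ^ (n + 2) * ‖iteratedDeriv n f 0‖) ≤
      n ! * ∫⁻ z in (‖·‖) ⁻¹' Ioo R (2 * R), ‖f z‖ₑ := by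
  set D := ‖iteratedDeriv n f 0‖
  have hcircle : ∀ r ∈ Ioo R (2 * R), ENNReal.ofReal (2 * π * R ^ (n + 1) * D) ≤
      n ! * (ENNReal.ofReal r * ∫⁻ θ in Ioo (-π) π, ‖f (circleMap 0 r θ)‖ₑ) := by
    intro r hr
    have hr0 : 0 < r := hR.trans hr.1
    have hcauchy := hf.differentiableOn.two_pi_mul_pow_mul_norm_iteratedDeriv_le (c := 0) hr0 n
    calc ENNReal.ofReal (2 * π * R ^ (n + 1) * D)
        ≤ ENNReal.ofReal (r * (2 * π * r ^ n * D)) := by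
          gcongr ENNReal.ofReal ?_
          calc 2 * π * R ^ (n + 1) * D = R * (2 * π * R ^ n * D) := by ring
            _ ≤ r * (2 * π * r ^ n * D) := by gcongr <;> exact hr.1.le
      _ ≤ ENNReal.ofReal (r * (n ! * ∫ θ in 0..2 * π, ‖f (circleMap 0 r θ)‖)) :=
          ENNReal.ofReal_le_ofReal (mul_le_mul_of_nonneg_left hcauchy hr0.le)
      _ = n ! * (ENNReal.ofReal r *
            ENNReal.ofReal (∫ θ in 0..2 * π, ‖f (circleMap 0 r θ)‖)) := by
          rw [ENNReal.ofReal_mul hr0.le, ENNReal.ofReal_mul (by positivity), ENNReal.ofReal_natCast]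
          ring
      _ ≤ _ := by gcongr; exact ofReal_intervalIntegral_norm_circleMap_le _ _ _
  rw [setLIntegral_preimage_norm_Ioo_eq_lintegral_circleMap hf.continuous.enorm.measurable hR.le,
    ← lintegral_const_mul' _ _ (ENNReal.natCast_ne_top _)]
  calc ENNReal.ofReal (2 * π * R ^ (n + 2) * D)
      = ∫⁻ _ in Ioo R (2 * R), ENNReal.ofReal (2 * π * R ^ (n + 1) * D) := by
        rw [setLIntegral_const, Real.volume_Ioo, ← ENNReal.ofReal_mul (by positivity)]
        ring_nf
    _ ≤ _ := setLIntegral_mono' measurableSet_Ioo hcircle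

theorem jap_pos (z : ℂ) : 0 < jap z := Real.sqrt_pos.2 (by positivity)

theorem jap_le_one_add_norm (z : ℂ) : jap z ≤ 1 + ‖z‖ :=
  Real.sqrt_le_iff.2 ⟨by positivity, by nlinarith [norm_nonneg z]⟩

theorem continuous_jap_rpow (s : ℝ) : Continuous fun z => jap z ^ s :=
  (by unfold jap; fun_prop : Continuous jap).rpow_const fun z => Or.inl (jap_pos z).ne'

theorem setLIntegral_preimage_norm_Ioo_enorm_le_eLpNorm_mul {ε : ℝ} (hε : 0 ≤ ε) {u : ℂ → ℂ}
    (hu : AEStronglyMeasurable u) {R : ℝ} (hR : 1 ≤ R) :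
    ∫⁻ z in (‖·‖) ⁻¹' Ioo R (2 * R), ‖u z‖ₑ ≤
      eLpNorm (fun z => ((jap z ^ (-ε) : ℝ) : ℂ) * u z) 2 (volume.restrict {z | R < ‖z‖}) *
        ENNReal.ofReal (2 * √π * 3 ^ ε * R ^ (ε + 1)) := by
  set A : Set ℂ := (‖·‖) ⁻¹' Ioo R (2 * R)
  have hA : MeasurableSet A := measurable_norm measurableSet_Ioo
  set w : ℂ → ℂ := fun z => ((jap z ^ ε : ℝ) : ℂ)
  have hw : Continuous w := continuous_ofReal.comp (continuous_jap_rpow ε)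
  have hsplit : u = w • fun z => ((jap z ^ (-ε) : ℝ) : ℂ) * u z := by
    ext z
    simp only [w, Pi.smul_apply', smul_eq_mul, ← mul_assoc, ← ofReal_mul,
      ← Real.rpow_add (jap_pos z), add_neg_cancel, Real.rpow_zero, ofReal_one, one_mul]
  have hweight : eLpNorm w 2 (volume.restrict A) ≤
      ENNReal.ofReal (2 * √π * R) * ENNReal.ofReal ((3 * R) ^ ε) := by
    have hbound : ∀ᵐ z ∂volume.restrict A, ‖w z‖ ≤ (3 * R) ^ ε := by
      refine ae_restrict_of_forall_mem hA fun z hz => ?_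
      rw [norm_real, Real.norm_of_nonneg (Real.rpow_pos_of_pos (jap_pos z) ε).le]
      exact Real.rpow_le_rpow (jap_pos z).le (by linarith [jap_le_one_add_norm z, hz.2]) hε
    have hvol : volume A ^ (2 : ℝ≥0∞).toReal⁻¹ ≤ ENNReal.ofReal (2 * √π * R) := by
      have hball : volume A ≤ ENNReal.ofReal ((2 * R) ^ 2 * π) := by
        calc volume A ≤ volume (ball (0 : ℂ) (2 * R)) :=
              measure_mono fun z hz => mem_ball_zero_iff.2 hz.2
          _ = ENNReal.ofReal ((2 * R) ^ 2 * π) := by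
              rw [Complex.volume_ball, ← ENNReal.ofReal_pow (by positivity),
                ENNReal.ofReal_mul (by positivity), ← NNReal.coe_real_pi,
                ENNReal.ofReal_coe_nnreal]
      calc volume A ^ (2 : ℝ≥0∞).toReal⁻¹ ≤ ENNReal.ofReal ((2 * R) ^ 2 * π) ^ (2 : ℝ)⁻¹ := by
            simpa using ENNReal.rpow_le_rpow hball (by norm_num : (0 : ℝ) ≤ 2⁻¹)
        _ = ENNReal.ofReal (2 * √π * R) := by
            rw [ENNReal.ofReal_rpow_of_nonneg (by positivity) (by norm_num), ← one_div,
              ← Real.sqrt_eq_rpow, Real.sqrt_mul (by positivity), Real.sqrt_sq (by positivity)]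
            ring_nf
    calc eLpNorm w 2 (volume.restrict A)
        ≤ (volume.restrict A) univ ^ (2 : ℝ≥0∞).toReal⁻¹ * ENNReal.ofReal ((3 * R) ^ ε) :=
          eLpNorm_le_of_ae_bound hbound
      _ ≤ _ := by
          rw [Measure.restrict_apply_univ]
          gcongr
  have hmono : eLpNorm (fun z => ((jap z ^ (-ε) : ℝ) : ℂ) * u z) 2 (volume.restrict A) ≤
      eLpNorm (fun z => ((jap z ^ (-ε) : ℝ) : ℂ) * u z) 2 (volume.restrict {z | R < ‖z‖}) :=
    eLpNorm_mono_measure _ (Measure.restrict_mono (fun z hz => hz.1) le_rfl)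
  calc ∫⁻ z in A, ‖u z‖ₑ = eLpNorm u 1 (volume.restrict A) := eLpNorm_one_eq_lintegral_enorm.symm
    _ ≤ eLpNorm w 2 (volume.restrict A) *
          eLpNorm (fun z => ((jap z ^ (-ε) : ℝ) : ℂ) * u z) 2 (volume.restrict A) := by
        conv_lhs => rw [hsplit]
        exact eLpNorm_smul_le_mul_eLpNorm
          ((continuous_ofReal.comp (continuous_jap_rpow (-ε))).aestronglyMeasurable.mul hu).restrict
          hw.aestronglyMeasurable
    _ ≤ _ := by
        rw [mul_comm]
        refine mul_le_mul' hmono (hweight.trans_eq ?_)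
        rw [← ENNReal.ofReal_mul (by positivity)]
        congr 1
        rw [Real.mul_rpow (by norm_num) (by positivity), Real.rpow_add_one (by positivity)]
        ring

theorem iteratedDeriv_eq_zero_of_memLp_jap_rpow_neg_mul {ε : ℝ} (hε : 0 ≤ ε) {u : ℂ → ℂ}
    (hu : Differentiable ℂ u)
    (hL2 : MemLp (fun z => ((jap z ^ (-ε) : ℝ) : ℂ) * u z) 2 volume) {n : ℕ} (hn : ε - 1 ≤ n) :
    iteratedDeriv n u 0 = 0 := by
  set t : ℝ → ℝ≥0∞ := fun R =>
    eLpNorm (fun z => ((jap z ^ (-ε) : ℝ) : ℂ) * u z) 2 (volume.restrict {z | R < ‖z‖})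
  set C : ℝ := 2 * √π * 3 ^ ε
  have hbound : ∀ R ≥ (1 : ℝ),
      ENNReal.ofReal (2 * π * ‖iteratedDeriv n u 0‖) ≤ n ! * t R * ENNReal.ofReal C := by
    intro R hR
    have hR0 : 0 < R := one_pos.trans_le hR
    have hRpow : R ^ (ε + 1) ≤ R ^ (n + 2) := by
      rw [← Real.rpow_natCast]
      exact Real.rpow_le_rpow_of_exponent_le hR (by push_cast; linarith)
    refine (ENNReal.mul_le_mul_iff_left (c := ENNReal.ofReal (R ^ (n + 2)))
      (ENNReal.ofReal_pos.2 (pow_pos hR0 _)).ne' ENNReal.ofReal_ne_top).1 ?_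
    calc ENNReal.ofReal (2 * π * ‖iteratedDeriv n u 0‖) * ENNReal.ofReal (R ^ (n + 2))
        = ENNReal.ofReal (2 * π * R ^ (n + 2) * ‖iteratedDeriv n u 0‖) := by
          rw [← ENNReal.ofReal_mul (by positivity)]; ring_nf
      _ ≤ n ! * ∫⁻ z in (‖·‖) ⁻¹' Ioo R (2 * R), ‖u z‖ₑ :=
          hu.ofReal_two_pi_mul_pow_mul_norm_iteratedDeriv_le n hR0
      _ ≤ n ! * (t R * ENNReal.ofReal (C * R ^ (ε + 1))) := by
          gcongr
          exact setLIntegral_preimage_norm_Ioo_enorm_le_eLpNorm_mul hε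
            hu.continuous.aestronglyMeasurable hR
      _ ≤ n ! * t R * ENNReal.ofReal C * ENNReal.ofReal (R ^ (n + 2)) := by
          rw [← mul_assoc, mul_assoc _ (ENNReal.ofReal C), ← ENNReal.ofReal_mul (by positivity)]
          gcongr
  have hlim : Tendsto (fun R => (n ! : ℝ≥0∞) * t R * ENNReal.ofReal C) atTop (𝓝 0) := by
    simpa using ENNReal.Tendsto.mul_const (ENNReal.Tendsto.const_mul
      (hL2.tendsto_eLpNorm_restrict_norm_gt (by norm_num)) (Or.inr (ENNReal.natCast_ne_top n !)))
      (Or.inr ENNReal.ofReal_ne_top)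
  have hzero : ENNReal.ofReal (2 * π * ‖iteratedDeriv n u 0‖) ≤ 0 :=
    ge_of_tendsto hlim ((eventually_ge_atTop 1).mono hbound)
  rw [nonpos_iff_eq_zero, ENNReal.ofReal_eq_zero] at hzero
  exact norm_le_zero_iff.1 (nonpos_of_mul_nonpos_right hzero (by positivity))

theorem stmt4 (ε : ℝ) (hε : 0 < ε) (u : ℂ → ℂ)
    (hu : Differentiable ℂ u)
    (hL2 : MemLp (fun z => ((jap z ^ (-ε) : ℝ) : ℂ) * u z) 2 volume) :
    (∃ p : Polynomial ℂ, (∀ z, u z = p.eval z) ∧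
      ∀ n : ℕ, ε - 1 ≤ (n : ℝ) → p.coeff n = 0) ∧
    (ε ≤ 1 → ∀ z, u z = 0) := by
  have hvanish : ∀ n : ℕ, ε - 1 ≤ n → iteratedDeriv n u 0 = 0 := fun n hn =>
    iteratedDeriv_eq_zero_of_memLp_jap_rpow_neg_mul hε.le hu hL2 hn
  obtain ⟨p, hp_eval, hp_coeff⟩ := hu.exists_polynomial_of_eventually_iteratedDeriv_eq_zero
    ((tendsto_natCast_atTop_atTop.eventually_ge_atTop (ε - 1)).mono hvanish)
  have hp_vanish : ∀ n : ℕ, ε - 1 ≤ n → p.coeff n = 0 := fun n hn => by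
    rw [hp_coeff, hvanish n hn, zero_div]
  refine ⟨⟨p, hp_eval, hp_vanish⟩, fun hε1 z => ?_⟩
  have hp : p = 0 := Polynomial.ext fun n => hp_vanish n (by linarith [n.cast_nonneg (α := ℝ)])
  rw [hp_eval, hp, Polynomial.eval_zero]
end

section
/- For z ∈ ℂ with Im z > 0, define G_r(z) = ∫_ℝ e^{-t²/2}/(z-t) dt, and for Im z < 0 define G_ℓ(z) = ∫_ℝ e^{-t²/2}/(z-t) dt. Both extend to entire functions on ℂ (by analytic continuation across the real axis), and they satisfy G_r(z) - G_ℓ(z) = -2πi e^{-z²/2} for all z ∈ ℂ. -/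
/-!
For `Im w > 0` one has `w⁻¹ = -i ∫₀^∞ e^{isw} ds`. Inserting this into the Cauchy integral of the
standard Gaussian measure `γ` and exchanging the integrals brings in the characteristic function
`e^{-s²/2}` of `γ`, and gives `G_r(z) = -2πi ∫_{s>0} e^{isz} dγ(s)`. This is the complex moment
generating function of `γ` restricted to a half-line, which is entire because `γ` has exponential
moments of all orders. The Cauchy integral is odd in `z`, so `G_ℓ(z) = -G_r(-z)`, and by the
symmetry of `γ` the two half-lines add up to
`G_r(z) + G_r(-z) = -2πi ∫ e^{isz} dγ(s) = -2πi e^{-z²/2}`.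
-/

open Complex MeasureTheory ProbabilityTheory Set

lemma inv_eq_neg_I_mul_integral_Ioi_cexp {w : ℂ} (hw : 0 < w.im) :
    w⁻¹ = -I * ∫ s in Ioi (0 : ℝ), cexp (I * w * s) := by
  have hw0 : w ≠ 0 := by rintro rfl; simp at hw
  rw [integral_exp_mul_complex_Ioi (by simpa using hw)]
  field_simp
  simp

section CauchyTransform

variable {μ : Measure ℝ} [IsFiniteMeasure μ] {z : ℂ}

lemma integrable_cexp_I_mul_sub_mul (hz : 0 < z.im) :
    Integrable (Function.uncurry fun (t s : ℝ) => cexp (I * (z - t) * s))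
      (μ.prod (volume.restrict (Ioi 0))) := by
  refine Integrable.mono' ((integrable_const (1 : ℝ)).mul_prod
    (exp_neg_integrableOn_Ioi 0 hz)) (by fun_prop) (ae_of_all _ fun p => ?_)
  simp [Complex.norm_exp, Function.uncurry]

theorem integral_inv_sub_eq_integral_Ioi_charFun (hz : 0 < z.im) :
    ∫ t, (z - t)⁻¹ ∂μ = -I * ∫ s in Ioi (0 : ℝ), charFun μ (-s) * cexp (I * z * s) := by
  calc ∫ t, (z - t)⁻¹ ∂μ = ∫ t : ℝ, -I * (∫ s in Ioi (0 : ℝ), cexp (I * (z - t) * s)) ∂μ := by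
        congr with t
        exact inv_eq_neg_I_mul_integral_Ioi_cexp (by simpa)
    _ = -I * ∫ s in Ioi (0 : ℝ), ∫ t : ℝ, cexp (I * (z - t) * s) ∂μ := by
        rw [integral_const_mul]
        exact congrArg _ (integral_integral_swap (integrable_cexp_I_mul_sub_mul hz))
    _ = -I * ∫ s in Ioi (0 : ℝ), charFun μ (-s) * cexp (I * z * s) := by
        congr 1
        refine integral_congr_ae (ae_of_all _ fun s => ?_)
        dsimp only
        rw [charFun_apply_real, ← integral_mul_const]
        congr 1 with t
        rw [← Complex.exp_add]
        push_cast
        ring_nf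

end CauchyTransform

lemma differentiable_complexMGF_of_integrableExpSet_eq_univ {Ω : Type*} {m : MeasurableSpace Ω}
    {X : Ω → ℝ} {μ : Measure Ω} (h : integrableExpSet X μ = univ) :
    Differentiable ℂ (complexMGF X μ) := by
  rw [← differentiableOn_univ]
  simpa [h] using differentiableOn_complexMGF (X := X) (μ := μ)

lemma complexMGF_restrict_Ioi_add_neg {μ : Measure ℝ} [NullSingletonClass μ]
    (hμ : MeasurePreserving (fun x : ℝ => -x) μ μ) {w : ℂ} (hw : w.re ∈ integrableExpSet id μ) :
    complexMGF id (μ.restrict (Ioi 0)) w + complexMGF id (μ.restrict (Ioi 0)) (-w)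
      = complexMGF id μ w := by
  have hint : Integrable (fun x : ℝ => cexp (w * x)) μ :=
    integrable_cexp_mul_of_re_mem_integrableExpSet (X := id) (by fun_prop) hw
  have hneg : ∫ x in Ioi 0, cexp (-w * x) ∂μ = ∫ x in Iic 0, cexp (w * x) ∂μ := calc
    _ = ∫ x in (fun x : ℝ => -x) ⁻¹' Iio 0, cexp (w * ↑(-x)) ∂μ := by simp [neg_mul]
    _ = ∫ x in Iio 0, cexp (w * x) ∂μ :=
        hμ.setIntegral_preimage_emb measurableEmbedding_neg (fun x : ℝ => cexp (w * x)) _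
    _ = ∫ x in Iic 0, cexp (w * x) ∂μ := setIntegral_congr_set Iio_ae_eq_Iic
  simp only [complexMGF, id, hneg]
  rw [add_comm, intervalIntegral.integral_Iic_add_Ioi hint.integrableOn hint.integrableOn]

lemma setIntegral_gaussianReal_zero_one {s : Set ℝ} (hs : MeasurableSet s) (f : ℝ → ℂ) :
    ∫ x in s, f x ∂gaussianReal 0 1
      = (√(2 * Real.pi) : ℂ)⁻¹ * ∫ x in s, cexp (-(x : ℂ) ^ 2 / 2) * f x := by
  rw [← integral_indicator hs, integral_gaussianReal_eq_integral_smul one_ne_zero,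
    ← integral_indicator hs, ← integral_const_mul]
  congr with x
  by_cases hx : x ∈ s <;> simp [hx, gaussianPDFReal, Complex.real_smul, mul_assoc]

lemma measurePreserving_neg_gaussianReal_zero (v : NNReal) :
    MeasurePreserving (fun x : ℝ => -x) (gaussianReal 0 v) (gaussianReal 0 v) :=
  ⟨measurable_neg, by simpa using gaussianReal_map_neg (μ := 0) (v := v)⟩

lemma integrableExpSet_id_restrict_gaussianReal (μ : ℝ) (v : NNReal) (s : Set ℝ) :
    integrableExpSet id ((gaussianReal μ v).restrict s) = univ :=
  eq_univ_of_forall fun t => (integrable_exp_mul_gaussianReal t).restrict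

lemma charFun_gaussianReal_zero_one (t : ℝ) :
    charFun (gaussianReal 0 1) t = cexp (-(t : ℂ) ^ 2 / 2) := by
  rw [charFun_gaussianReal]
  push_cast
  ring_nf

lemma sqrt_two_pi_ne_zero : (√(2 * Real.pi) : ℂ) ≠ 0 := ofReal_ne_zero.2 (by positivity)

lemma sq_sqrt_two_pi : (√(2 * Real.pi) : ℂ) ^ 2 = 2 * Real.pi := by
  rw [← ofReal_pow, Real.sq_sqrt (by positivity), ofReal_mul, ofReal_ofNat]

lemma integral_cexp_div_neg_sub (z : ℂ) :
    ∫ t : ℝ, cexp (-(t : ℂ) ^ 2 / 2) / (-z - t) = -∫ t : ℝ, cexp (-(t : ℂ) ^ 2 / 2) / (z - t) := by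
  rw [← integral_neg, ← integral_neg_eq_self]
  congr with t
  push_cast
  rw [neg_sq, show -z - -(t : ℂ) = -(z - t) by ring, div_neg]

noncomputable def gaussianCauchyUpper (z : ℂ) : ℂ :=
  -2 * Real.pi * I * complexMGF id ((gaussianReal 0 1).restrict (Ioi 0)) (I * z)

lemma differentiable_gaussianCauchyUpper : Differentiable ℂ gaussianCauchyUpper :=
  ((differentiable_complexMGF_of_integrableExpSet_eq_univ
    (integrableExpSet_id_restrict_gaussianReal 0 1 _)).comp
      (differentiable_id.const_mul I)).const_mul _

lemma gaussianCauchyUpper_eq_integral {z : ℂ} (hz : 0 < z.im) :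
    gaussianCauchyUpper z = ∫ t : ℝ, cexp (-(t : ℂ) ^ 2 / 2) / (z - t) := by
  have hγ := integral_inv_sub_eq_integral_Ioi_charFun (μ := gaussianReal 0 1) hz
  simp_rw [charFun_gaussianReal_zero_one, ofReal_neg, neg_sq] at hγ
  rw [← setIntegral_univ, setIntegral_gaussianReal_zero_one MeasurableSet.univ, setIntegral_univ,
    inv_mul_eq_iff_eq_mul₀ sqrt_two_pi_ne_zero] at hγ
  simp only [fun t : ℝ => div_eq_mul_inv (cexp (-(t : ℂ) ^ 2 / 2)) (z - t), gaussianCauchyUpper,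
    complexMGF, id]
  rw [hγ, setIntegral_gaussianReal_zero_one measurableSet_Ioi]
  generalize ∫ s in Ioi (0 : ℝ), cexp (-(s : ℂ) ^ 2 / 2) * cexp (I * z * s) = J
  field_simp
  rw [sq_sqrt_two_pi]

lemma gaussianCauchyUpper_add_neg (z : ℂ) :
    gaussianCauchyUpper z + gaussianCauchyUpper (-z)
      = -2 * Real.pi * I * cexp (-z ^ 2 / 2) := by
  have := nullSingletonClass_gaussianReal (μ := 0) one_ne_zero
  rw [gaussianCauchyUpper, gaussianCauchyUpper, ← mul_add, mul_neg,
    complexMGF_restrict_Ioi_add_neg (measurePreserving_neg_gaussianReal_zero 1) (by simp),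
    complexMGF_id_gaussianReal]
  congr 2
  rw [mul_pow, I_sq]
  push_cast
  ring

theorem stmt16 :
    ∃ Gr Gl : ℂ → ℂ, Differentiable ℂ Gr ∧ Differentiable ℂ Gl ∧
      (∀ z : ℂ, 0 < z.im →
        Gr z = ∫ t : ℝ, Complex.exp (-(t : ℂ) ^ 2 / 2) / (z - (t : ℂ))) ∧
      (∀ z : ℂ, z.im < 0 →
        Gl z = ∫ t : ℝ, Complex.exp (-(t : ℂ) ^ 2 / 2) / (z - (t : ℂ))) ∧
      ∀ z : ℂ, Gr z - Gl z = -2 * (Real.pi : ℂ) * Complex.I * Complex.exp (-z ^ 2 / 2) := by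
  refine ⟨gaussianCauchyUpper, fun z => -gaussianCauchyUpper (-z),
    differentiable_gaussianCauchyUpper,
    (differentiable_gaussianCauchyUpper.comp differentiable_neg).neg,
    fun z hz => ?_, fun z hz => ?_, fun z => ?_⟩
  · exact gaussianCauchyUpper_eq_integral hz
  · dsimp only
    rw [gaussianCauchyUpper_eq_integral (z := -z) (by simpa using hz), integral_cexp_div_neg_sub,
      neg_neg]
  · dsimp only
    rw [sub_neg_eq_add, gaussianCauchyUpper_add_neg]
end
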